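/- Subsampled point-mass dominating pair bound: let ρ ∈ [0,1], σ > 0, and let μ be the law of a Bernoulli(ρ) random variable. Define P as the Gaussian mixture P = (1-ρ)·N(0, σ²) + ρ·N(1, σ²) and Q = N(0, σ²). Then for every α ∈ (0,1), B_{(P,Q)}(α) ≤ (1-ρ)·α + ρ·(1 - Φ(Φ^{-1}(1-α) - 1/σ)); i.e., the blow-up of the subsampled Gaussian mechanism is a convex combination of the identity and the Gaussian blow-up. -/

import Mathlib

/-!
For `Q(E) ≤ α`, split `P(E) = (1-ρ)·N(0,σ²)(E) + ρ·N(1,σ²)(E)`. The first term is at most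
`(1-ρ)·α`. For the second, the likelihood ratio of `N(1,σ²)` to `N(0,σ²)` is increasing, so by
Neyman–Pearson the half-line `[σ·Φ⁻¹(1-α), ∞)`, which has `N(0,σ²)`-mass exactly `α`, maximises
the `N(1,σ²)`-mass among sets of `N(0,σ²)`-mass at most `α`; that maximal mass is
`1 - Φ(Φ⁻¹(1-α) - 1/σ)`.
-/

open MeasureTheory ProbabilityTheory Set

/-- Standard normal CDF. -/
noncomputable def Phi : ℝ → ℝ := fun x => ProbabilityTheory.cdf (gaussianReal 0 1) x

/-- Inverse of the standard normal CDF. -/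
noncomputable def PhiInv : ℝ → ℝ := Function.invFun Phi

/-- Blow-up function `B_{(P,Q)}(α) = sup {P(E) : Q(E) ≤ α}`. -/
noncomputable def blowUp {Ω : Type*} [MeasurableSpace Ω] (P Q : Measure Ω) (α : ℝ) : ℝ :=
  sSup {x : ℝ | ∃ E : Set Ω, MeasurableSet E ∧ (Q E).toReal ≤ α ∧ x = (P E).toReal}

open scoped NNReal ENNReal

section CDF

variable (μ : Measure ℝ) [IsProbabilityMeasure μ] [NullSingletonClass μ]

lemma leftLim_cdf (x : ℝ) : Function.leftLim (cdf μ) x = cdf μ x := by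
  have hjump : ENNReal.ofReal (cdf μ x - Function.leftLim (cdf μ) x) = 0 := by
    rw [← StieltjesFunction.measure_singleton, measure_cdf, measure_singleton]
  have := (monotone_cdf μ).leftLim_le (le_refl x)
  rw [ENNReal.ofReal_eq_zero] at hjump
  linarith

lemma continuous_cdf : Continuous (cdf μ) := by
  refine continuous_iff_continuousAt.2 fun x ↦ continuousAt_iff_continuous_left'_right'.2 ⟨?_, ?_⟩
  · exact (monotone_cdf μ).continuousWithinAt_Iio_iff_leftLim_eq.2 (leftLim_cdf μ x)
  · exact ((cdf μ).right_continuous x).mono Ioi_subset_Ici_self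

lemma measure_Ici_eq_ofReal_one_sub_cdf (x : ℝ) : μ (Ici x) = ENNReal.ofReal (1 - cdf μ x) := by
  conv_lhs =>
    rw [← measure_cdf μ, StieltjesFunction.measure_Ici _ (tendsto_cdf_atTop μ), leftLim_cdf]

end CDF

instance : NullSingletonClass (gaussianReal 0 1) := nullSingletonClass_gaussianReal one_ne_zero

lemma continuous_Phi : Continuous Phi := continuous_cdf _

lemma Phi_le_one (x : ℝ) : Phi x ≤ 1 := cdf_le_one _ _

lemma Phi_PhiInv {y : ℝ} (hy : y ∈ Ioo (0 : ℝ) 1) : Phi (PhiInv y) = y :=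
  Function.invFun_eq <| mem_range_of_exists_le_of_exists_ge continuous_Phi
    ((tendsto_cdf_atBot _).eventually_le_const hy.1).exists
    ((tendsto_cdf_atTop _).eventually_const_le hy.2).exists

lemma gaussianReal_Ici (m : ℝ) {v : ℝ≥0} (hv : v ≠ 0) (s : ℝ) :
    gaussianReal m v (Ici s) = ENNReal.ofReal (1 - Phi ((s - m) / √v)) := by
  have hσ : 0 < √(v : ℝ) := Real.sqrt_pos.2 (by positivity)
  have hstd : (gaussianReal m v).map (fun x ↦ (x - m) / √v) = gaussianReal 0 1 := by
    rw [show (fun x ↦ (x - m) / √v) = (· / √v) ∘ (· - m) from rfl,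
      ← Measure.map_map (by fun_prop) (by fun_prop), gaussianReal_map_sub_const,
      gaussianReal_map_div_const, sub_self, zero_div]
    congr
    ext
    simp [hv]
  have hpre : (fun x ↦ (x - m) / √v) ⁻¹' Ici ((s - m) / √v) = Ici s := by
    ext x; simp [div_le_div_iff_of_pos_right hσ]
  rw [← hpre, ← Measure.map_apply (by fun_prop) measurableSet_Ici, hstd,
    measure_Ici_eq_ofReal_one_sub_cdf]
  rfl

/-- Neyman–Pearson: a region `T` on which the likelihood ratio `dν/dμ` is at least `k`, and off
which it is at most `k`, is a most powerful test at its own level. -/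
lemma measure_le_of_likelihoodRatio {Ω : Type*} [MeasurableSpace Ω] {μ ν : Measure Ω}
    [IsFiniteMeasure μ] {T E : Set Ω} {k : ℝ≥0∞} (hT : MeasurableSet T) (hE : MeasurableSet E)
    (h_out : ∀ A ⊆ Tᶜ, MeasurableSet A → ν A ≤ k * μ A)
    (h_in : ∀ A ⊆ T, MeasurableSet A → k * μ A ≤ ν A)
    (hμ : μ E ≤ μ T) : ν E ≤ ν T := by
  have hcancel : μ (E \ T) ≤ μ (T \ E) := by
    rw [← measure_inter_add_sdiff E hT, ← measure_inter_add_sdiff T hE, inter_comm] at hμ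
    exact (ENNReal.add_le_add_iff_left (measure_ne_top _ _)).1 hμ
  calc ν E = ν (E ∩ T) + ν (E \ T) := (measure_inter_add_sdiff E hT).symm
    _ ≤ ν (E ∩ T) + k * μ (E \ T) :=
        add_le_add_right (h_out _ (fun _ hx ↦ hx.2) (hE.diff hT)) _
    _ ≤ ν (E ∩ T) + k * μ (T \ E) := by gcongr
    _ ≤ ν (E ∩ T) + ν (T \ E) := add_le_add_right (h_in _ sdiff_subset (hT.diff hE)) _
    _ = ν T := by rw [inter_comm, measure_inter_add_sdiff T hE]

lemma gaussianPDFReal_eq_exp_mul (m : ℝ) {v : ℝ≥0} (hv : v ≠ 0) (x : ℝ) :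
    gaussianPDFReal m v x = Real.exp ((2 * m * x - m ^ 2) / (2 * v)) * gaussianPDFReal 0 v x := by
  have hv' : (v : ℝ) ≠ 0 := by exact_mod_cast hv
  simp only [gaussianPDFReal, sub_zero]
  rw [mul_left_comm, ← Real.exp_add]
  congr 2
  field_simp
  ring

section GaussianShift

variable {m : ℝ} {v : ℝ≥0} {t : ℝ}

lemma gaussianReal_le_mul_of_subset_Iio (hv : v ≠ 0) (hm : 0 ≤ m) {A : Set ℝ} (hA : A ⊆ Iio t) :
    gaussianReal m v A
      ≤ ENNReal.ofReal (Real.exp ((2 * m * t - m ^ 2) / (2 * v))) * gaussianReal 0 v A := by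
  rw [gaussianReal_apply m hv, gaussianReal_apply 0 hv,
    ← lintegral_const_mul _ (measurable_gaussianPDF 0 v)]
  refine setLIntegral_mono ((measurable_gaussianPDF 0 v).const_mul _) fun x hx ↦ ?_
  rw [gaussianPDF, gaussianPDF, gaussianPDFReal_eq_exp_mul m hv,
    ENNReal.ofReal_mul (Real.exp_nonneg _)]
  gcongr
  exact (hA hx).le

lemma mul_le_gaussianReal_of_subset_Ici (hv : v ≠ 0) (hm : 0 ≤ m) {A : Set ℝ} (hA : A ⊆ Ici t) :
    ENNReal.ofReal (Real.exp ((2 * m * t - m ^ 2) / (2 * v))) * gaussianReal 0 v A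
      ≤ gaussianReal m v A := by
  rw [gaussianReal_apply m hv, gaussianReal_apply 0 hv,
    ← lintegral_const_mul _ (measurable_gaussianPDF 0 v)]
  refine setLIntegral_mono (measurable_gaussianPDF m v) fun x hx ↦ ?_
  rw [gaussianPDF, gaussianPDF, gaussianPDFReal_eq_exp_mul m hv,
    ENNReal.ofReal_mul (Real.exp_nonneg _)]
  gcongr
  exact hA hx

lemma gaussianReal_le_gaussianReal_Ici (hv : v ≠ 0) (hm : 0 ≤ m) {E : Set ℝ}
    (hE : MeasurableSet E) (hle : gaussianReal 0 v E ≤ gaussianReal 0 v (Ici t)) :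
    gaussianReal m v E ≤ gaussianReal m v (Ici t) :=
  measure_le_of_likelihoodRatio measurableSet_Ici hE
    (fun _ hA _ ↦ gaussianReal_le_mul_of_subset_Iio hv hm (by rwa [← compl_Ici]))
    (fun _ hA _ ↦ mul_le_gaussianReal_of_subset_Ici hv hm hA) hle

end GaussianShift

lemma gaussianReal_toReal_le_of_toReal_le {m : ℝ} {v : ℝ≥0} {α : ℝ} (hm : 0 ≤ m) (hv : v ≠ 0)
    (hα : α ∈ Ioo (0 : ℝ) 1) {E : Set ℝ} (hE : MeasurableSet E)
    (hE0 : (gaussianReal 0 v E).toReal ≤ α) :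
    (gaussianReal m v E).toReal ≤ 1 - Phi (PhiInv (1 - α) - m / √v) := by
  have hσ : √(v : ℝ) ≠ 0 := (Real.sqrt_pos.2 (by positivity)).ne'
  set c := PhiInv (1 - α)
  have hc : Phi c = 1 - α := Phi_PhiInv ⟨by linarith [hα.2], by linarith [hα.1]⟩
  have h0 : gaussianReal 0 v (Ici (√v * c)) = ENNReal.ofReal α := by
    rw [gaussianReal_Ici 0 hv, sub_zero, mul_div_cancel_left₀ _ hσ, hc, sub_sub_cancel]
  have h1 : gaussianReal m v (Ici (√v * c)) = ENNReal.ofReal (1 - Phi (c - m / √v)) := by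
    rw [gaussianReal_Ici m hv, sub_div, mul_div_cancel_left₀ _ hσ]
  have hle : gaussianReal 0 v E ≤ gaussianReal 0 v (Ici (√v * c)) :=
    h0 ▸ (ENNReal.le_ofReal_iff_toReal_le (measure_ne_top _ _) hα.1.le).2 hE0
  have hNP := gaussianReal_le_gaussianReal_Ici hv hm hE hle
  rw [h1] at hNP
  exact ENNReal.toReal_le_of_le_ofReal (by linarith [Phi_le_one (c - m / √v)]) hNP

lemma toReal_mixture_apply {Ω : Type*} [MeasurableSpace Ω] {ρ : ℝ} (hρ : ρ ∈ Icc (0 : ℝ) 1)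
    (μ ν : Measure Ω) [IsFiniteMeasure μ] [IsFiniteMeasure ν] (E : Set Ω) :
    ((ENNReal.ofReal (1 - ρ) • μ + ENNReal.ofReal ρ • ν) E).toReal
      = (1 - ρ) * (μ E).toReal + ρ * (ν E).toReal := by
  rw [Measure.add_apply, Measure.smul_apply, Measure.smul_apply, smul_eq_mul, smul_eq_mul,
    ENNReal.toReal_add (by finiteness) (by finiteness), ENNReal.toReal_mul, ENNReal.toReal_mul,
    ENNReal.toReal_ofReal (by linarith [hρ.2]), ENNReal.toReal_ofReal hρ.1]

lemma blowUp_le {Ω : Type*} [MeasurableSpace Ω] {P Q : Measure Ω} {α b : ℝ} (hb : 0 ≤ b)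
    (h : ∀ E, MeasurableSet E → (Q E).toReal ≤ α → (P E).toReal ≤ b) : blowUp P Q α ≤ b :=
  Real.sSup_le (by rintro _ ⟨E, hE, hQE, rfl⟩; exact h E hE hQE) hb

theorem stmt19 (ρ σ : ℝ) (hρ : ρ ∈ Icc (0:ℝ) 1) (hσ : 0 < σ)
    (P Q : Measure ℝ)
    (hP : P = ENNReal.ofReal (1 - ρ) • gaussianReal 0 ⟨σ ^ 2, sq_nonneg σ⟩
            + ENNReal.ofReal ρ • gaussianReal 1 ⟨σ ^ 2, sq_nonneg σ⟩)
    (hQ : Q = gaussianReal 0 ⟨σ ^ 2, sq_nonneg σ⟩) :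
    ∀ α ∈ Ioo (0:ℝ) 1,
      blowUp P Q α ≤ (1 - ρ) * α + ρ * (1 - Phi (PhiInv (1 - α) - 1 / σ)) := by
  intro α hα
  subst hP hQ
  set v : ℝ≥0 := ⟨σ ^ 2, sq_nonneg σ⟩
  have hv : v ≠ 0 := (NNReal.coe_pos.1 (show (0 : ℝ) < (v : ℝ) from pow_pos hσ 2)).ne'
  have hsqrt : √(v : ℝ) = σ := Real.sqrt_sq hσ.le
  have hρ' : 0 ≤ 1 - ρ := by linarith [hρ.2]
  have hΦ : 0 ≤ 1 - Phi (PhiInv (1 - α) - 1 / σ) := by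
    linarith [Phi_le_one (PhiInv (1 - α) - 1 / σ)]
  refine blowUp_le (add_nonneg (mul_nonneg hρ' hα.1.le) (mul_nonneg hρ.1 hΦ)) fun E hE hE0 ↦ ?_
  rw [toReal_mixture_apply hρ]
  have hE1 := gaussianReal_toReal_le_of_toReal_le zero_le_one hv hα hE hE0
  rw [hsqrt] at hE1
  gcongr
  exact hρ.1
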